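/- arXiv:2402.04732 — 3 statements merged into one kernel-verified Lean document; each statement's English description precedes it below -/
import Mathlib

section
/- Let L be a real n×n matrix, w ∈ ℝⁿ and v ∈ ℝᵏ, and let X be an n×k real matrix whose row sums equal w (X𝟙 = w) and whose column sums equal v (Xᵀ𝟙 = v). Then the Gromov–Wasserstein ℓ2 objective with source similarity matrix M = −L and target similarity matrix M̄ = I_k satisfies Σ_{i,p=1}^n Σ_{j,q=1}^k ((−L_{ip}) − δ_{jq})² x_{ij} x_{pq} = Σ_{i,p=1}^n L_{ip}² w_i w_p + 2 Tr(Xᵀ L X) + Σ_{j=1}^k v_j², where δ_{jq} is the Kronecker delta. In particular, over matrices with fixed row sums w and column sums v, minimizing the Gromov–Wasserstein ℓ2 objective with M = −L and M̄ = I_k is equivalent to minimizing Tr(Xᵀ L X). -/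
open Finset Matrix

/-- **Gromov–Wasserstein ℓ₂ objective with target identity similarity.**
For `M = -L`, `M̄ = I_k`, and a coupling `X` with row sums `w` and column sums `v`,
`∑_{i,p,j,q} ((-L_{ip}) - δ_{jq})² x_{ij} x_{pq}
   = ∑_{i,p} L_{ip}² w_i w_p + 2 Tr(Xᵀ L X) + ∑_j v_j²`,
so over couplings with fixed marginals, minimizing the GW ℓ₂ objective is
equivalent to minimizing `Tr(Xᵀ L X)`. -/
theorem gw_objective_eq_trace {n k : ℕ}
    (L : Matrix (Fin n) (Fin n) ℝ)
    (w : Fin n → ℝ) (v : Fin k → ℝ)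
    (X : Matrix (Fin n) (Fin k) ℝ)
    (hrow : ∀ i, ∑ j, X i j = w i)
    (hcol : ∀ j, ∑ i, X i j = v j) :
    ∑ i : Fin n, ∑ p : Fin n, ∑ j : Fin k, ∑ q : Fin k,
        ((-L i p) - (if j = q then (1 : ℝ) else 0)) ^ 2 * X i j * X p q
      = (∑ i : Fin n, ∑ p : Fin n, (L i p) ^ 2 * w i * w p)
        + 2 * Matrix.trace (Xᵀ * L * X)
        + ∑ j : Fin k, (v j) ^ 2 := by
  have key : ∀ (i p : Fin n) (j q : Fin k),
      ((-L i p) - (if j = q then (1 : ℝ) else 0)) ^ 2 * X i j * X p q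
      = (L i p) ^ 2 * (X i j * X p q)
        + (2 * (L i p) * (if j = q then (1:ℝ) else 0) * (X i j * X p q)
        + (if j = q then (1:ℝ) else 0) * (X i j * X p q)) := by
    intro i p j q; split_ifs <;> ring
  simp only [key, Finset.sum_add_distrib]
  have h1 : ∑ i : Fin n, ∑ p : Fin n, ∑ j : Fin k, ∑ q : Fin k,
      (L i p) ^ 2 * (X i j * X p q)
      = ∑ i : Fin n, ∑ p : Fin n, (L i p) ^ 2 * w i * w p := by
    refine Finset.sum_congr rfl fun i _ => Finset.sum_congr rfl fun p _ => ?_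
    have : ∑ j : Fin k, ∑ q : Fin k, (L i p) ^ 2 * (X i j * X p q)
        = (L i p)^2 * ((∑ j, X i j) * (∑ q, X p q)) := by
      rw [Finset.sum_mul_sum, Finset.mul_sum]
      exact Finset.sum_congr rfl fun j _ => by rw [Finset.mul_sum]
    rw [this, hrow i, hrow p]; ring
  have htr : Matrix.trace (Xᵀ * L * X)
      = ∑ j : Fin k, ∑ p : Fin n, ∑ i : Fin n, X i j * L i p * X p j := by
    simp only [Matrix.trace, Matrix.diag, Matrix.mul_apply, Matrix.transpose_apply,
      Finset.sum_mul]
  have h2 : ∑ i : Fin n, ∑ p : Fin n, ∑ j : Fin k, ∑ q : Fin k,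
      2 * (L i p) * (if j = q then (1:ℝ) else 0) * (X i j * X p q)
      = 2 * Matrix.trace (Xᵀ * L * X) := by
    rw [htr]
    simp only [mul_ite, ite_mul, mul_one, mul_zero, one_mul, zero_mul,
      Finset.sum_ite_eq, Finset.mem_univ, if_true]
    calc ∑ i : Fin n, ∑ p : Fin n, ∑ j : Fin k, 2 * L i p * (X i j * X p j)
        = ∑ i : Fin n, ∑ j : Fin k, ∑ p : Fin n, 2 * L i p * (X i j * X p j) :=
          Finset.sum_congr rfl fun i _ => Finset.sum_comm
      _ = ∑ j : Fin k, ∑ i : Fin n, ∑ p : Fin n, 2 * L i p * (X i j * X p j) :=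
          Finset.sum_comm
      _ = ∑ j : Fin k, ∑ p : Fin n, ∑ i : Fin n, 2 * L i p * (X i j * X p j) :=
          Finset.sum_congr rfl fun j _ => Finset.sum_comm
      _ = 2 * ∑ j : Fin k, ∑ p : Fin n, ∑ i : Fin n, X i j * L i p * X p j := by
          rw [Finset.mul_sum]
          refine Finset.sum_congr rfl fun j _ => ?_
          rw [Finset.mul_sum]
          refine Finset.sum_congr rfl fun p _ => ?_
          rw [Finset.mul_sum]
          exact Finset.sum_congr rfl fun i _ => by ring
  have h3 : ∑ i : Fin n, ∑ p : Fin n, ∑ j : Fin k, ∑ q : Fin k,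
      (if j = q then (1:ℝ) else 0) * (X i j * X p q)
      = ∑ j : Fin k, (v j) ^ 2 := by
    simp only [ite_mul, one_mul, zero_mul, Finset.sum_ite_eq, Finset.mem_univ, if_true]
    calc ∑ i : Fin n, ∑ p : Fin n, ∑ j : Fin k, X i j * X p j
        = ∑ i : Fin n, ∑ j : Fin k, ∑ p : Fin n, X i j * X p j :=
          Finset.sum_congr rfl fun i _ => Finset.sum_comm
      _ = ∑ j : Fin k, ∑ i : Fin n, ∑ p : Fin n, X i j * X p j := Finset.sum_comm
      _ = ∑ j : Fin k, (v j) ^ 2 := by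
          refine Finset.sum_congr rfl fun j _ => ?_
          have : ∑ i : Fin n, ∑ p : Fin n, X i j * X p j
              = (∑ i, X i j) * (∑ p, X p j) := (Finset.sum_mul_sum _ _ _ _).symm
          rw [this, hcol j]; ring
  rw [h1, h2, h3]; ring
end

section
/- Let λ > 0, α = 1/(2λ), L an n×n real matrix, X an n×k real matrix, and S any set of n×k real matrices. Then a matrix Z* ∈ S minimizes the proximal objective Z ↦ (1/(2α))‖Z − (I − 2αL)X‖² − λ‖Z‖² over S if and only if Z* minimizes the linear objective Z ↦ ⟨Z, (2αL − I)X⟩ over S. In particular, the proximal step of the nonconvex proximal gradient algorithm for the regularized graph cut problem over the transportation polytope reduces to a classical (linear) optimal transport problem. -/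
open Matrix

/-- Frobenius inner product `⟨A, B⟩ = Tr(Aᵀ B)`. -/
noncomputable def frobInner {n k : ℕ} (A B : Matrix (Fin n) (Fin k) ℝ) : ℝ :=
  Matrix.trace (Aᵀ * B)

/-- Squared Frobenius norm `‖A‖² = ⟨A, A⟩`. -/
noncomputable def frobNormSq {n k : ℕ} (A : Matrix (Fin n) (Fin k) ℝ) : ℝ :=
  frobInner A A

lemma frobInner_comm {n k : ℕ} (A B : Matrix (Fin n) (Fin k) ℝ) :
    frobInner A B = frobInner B A := by
  unfold frobInner
  rw [← Matrix.trace_transpose (Aᵀ * B), Matrix.transpose_mul, Matrix.transpose_transpose]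

lemma frobNormSq_sub {n k : ℕ} (A B : Matrix (Fin n) (Fin k) ℝ) :
    frobNormSq (A - B) = frobNormSq A - 2 * frobInner A B + frobNormSq B := by
  have h := frobInner_comm A B
  unfold frobNormSq frobInner at *
  simp only [Matrix.transpose_sub, Matrix.sub_mul, Matrix.mul_sub, Matrix.trace_sub]
  linarith

lemma frobInner_neg_right {n k : ℕ} (A B : Matrix (Fin n) (Fin k) ℝ) :
    frobInner A (-B) = - frobInner A B := by
  unfold frobInner; simp

/-- **The proximal step reduces to a linear optimal transport problem.**
For `λ > 0`, `α = 1/(2λ)`, and any set `S` of `n × k` matrices, a matrix `Z* ∈ S`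
minimizes `Z ↦ (1/(2α))‖Z − (I − 2αL)X‖² − λ‖Z‖²` over `S` iff it minimizes the
linear objective `Z ↦ ⟨Z, (2αL − I)X⟩` over `S`. -/
theorem prox_minimizer_iff_linear_minimizer {n k : ℕ}
    (lam : ℝ) (hlam : 0 < lam) (α : ℝ) (hα : α = 1 / (2 * lam))
    (L : Matrix (Fin n) (Fin n) ℝ) (X : Matrix (Fin n) (Fin k) ℝ)
    (S : Set (Matrix (Fin n) (Fin k) ℝ))
    (Zstar : Matrix (Fin n) (Fin k) ℝ) (hZstar : Zstar ∈ S) :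
    (∀ Z ∈ S,
        (1 / (2 * α)) * frobNormSq (Zstar - ((1 : Matrix (Fin n) (Fin n) ℝ) - (2 * α) • L) * X)
            - lam * frobNormSq Zstar
          ≤ (1 / (2 * α)) * frobNormSq (Z - ((1 : Matrix (Fin n) (Fin n) ℝ) - (2 * α) • L) * X)
            - lam * frobNormSq Z) ↔
    (∀ Z ∈ S,
        frobInner Zstar (((2 * α) • L - (1 : Matrix (Fin n) (Fin n) ℝ)) * X)
          ≤ frobInner Z (((2 * α) • L - (1 : Matrix (Fin n) (Fin n) ℝ)) * X)) := by
  have hlam' : lam ≠ 0 := ne_of_gt hlam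
  have hinv : 1 / (2 * α) = lam := by
    rw [hα]; field_simp
  set M : Matrix (Fin n) (Fin k) ℝ := ((1 : Matrix (Fin n) (Fin n) ℝ) - (2 * α) • L) * X with hM
  have hneg : (((2 * α) • L - (1 : Matrix (Fin n) (Fin n) ℝ)) * X) = -M := by
    rw [hM, ← Matrix.neg_mul]
    congr 1
    simp [neg_sub]
  have key : ∀ Z : Matrix (Fin n) (Fin k) ℝ,
      (1 / (2 * α)) * frobNormSq (Z - M) - lam * frobNormSq Z
        = 2 * lam * frobInner Z (-M) + lam * frobNormSq M := by
    intro Z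
    rw [hinv, frobNormSq_sub, frobInner_neg_right]
    ring
  constructor
  · intro h Z hZ
    have h1 := h Z hZ
    rw [key Zstar, key Z] at h1
    rw [hneg]
    nlinarith
  · intro h Z hZ
    have h1 := h Z hZ
    rw [hneg] at h1
    rw [key Zstar, key Z]
    nlinarith
end

section
/- Let n and k be positive integers with k dividing n, and consider the uniform marginals w = (1/n)𝟙ₙ ∈ ℝⁿ and v = (1/k)𝟙ₖ ∈ ℝᵏ. Then every extreme point X of the transportation polytope Π(w,v) has all entries in {0, 1/n}; equivalently, nX is a 0/1 matrix with exactly one 1 per row and with each column summing to n/k, so that up to the constant factor 1/n every extreme point is a partition matrix whose clusters all have cardinality n/k. -/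
open Finset Matrix

/-- The transportation polytope `Π(w, v)`: `n × k` real matrices with nonnegative
entries, row sums `w` and column sums `v`. -/
def transportPolytope {n k : ℕ} (w : Fin n → ℝ) (v : Fin k → ℝ) :
    Set (Matrix (Fin n) (Fin k) ℝ) :=
  {X | (∀ i j, 0 ≤ X i j) ∧ (∀ i, ∑ j, X i j = w i) ∧ (∀ j, ∑ i, X i j = v j)}

/-!
Write `n = k * d`. Replacing each column of `X ∈ Π((1/n)𝟙, (1/k)𝟙)` by `d` copies of `n/d`
times itself gives an `n × n` doubly stochastic matrix, and conversely summing blocks of `d`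
columns and dividing by `n` maps doubly stochastic matrices into `Π`. So `Π` is a linear image of
the Birkhoff polytope, hence the convex hull of the images of the permutation matrices, which are
`1/n` times partition matrices with `d` rows in every cluster; an extreme point of a convex hull
lies in its generating set.
-/

variable {n k d : ℕ}

def partitionMatrix (f : Fin n → Fin k) : Matrix (Fin n) (Fin k) ℝ :=
  of fun i j => if f i = j then 1 else 0

lemma card_filter_fst_equiv_eq (g : Fin n ≃ Fin k × Fin d) (j : Fin k) :
    #{i | (g i).1 = j} = d := by
  rw [card_equiv (t := {j} ×ˢ univ) g fun i => by simp [Prod.ext_iff, eq_comm]]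
  simp

variable (e : Fin k × Fin d ≃ Fin n)

noncomputable def mergeColumns : Matrix (Fin n) (Fin n) ℝ →ₗ[ℝ] Matrix (Fin n) (Fin k) ℝ where
  toFun M := of fun i j => (∑ c, M i (e (j, c))) / n
  map_add' M N := by ext i j; simp [sum_add_distrib, add_div]
  map_smul' a M := by ext i j; simp [← mul_sum, mul_div_assoc]

noncomputable def spreadColumns (X : Matrix (Fin n) (Fin k) ℝ) : Matrix (Fin n) (Fin n) ℝ :=
  of fun i l => n * X i (e.symm l).1 / d

lemma mergeColumns_permMatrix (σ : Equiv.Perm (Fin n)) :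
    mergeColumns e (σ.permMatrix ℝ) =
      (1 / n : ℝ) • partitionMatrix fun i => (e.symm (σ i)).1 := by
  ext i j
  obtain ⟨⟨j', c'⟩, hp⟩ : ∃ p, σ i = e p := ⟨_, (e.apply_symm_apply _).symm⟩
  by_cases hj : j' = j <;>
    simp [mergeColumns, partitionMatrix, PEquiv.toMatrix_apply, hp, Prod.ext_iff, hj, filter_eq]

lemma mergeColumns_mem_transportPolytope {M : Matrix (Fin n) (Fin n) ℝ}
    (hM : M ∈ doublyStochastic ℝ (Fin n)) :
    mergeColumns e M ∈ transportPolytope (fun _ => (1 : ℝ) / n) (fun _ => (d : ℝ) / n) := by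
  obtain ⟨hnonneg, hrow, hcol⟩ := mem_doublyStochastic_iff_sum.1 hM
  refine ⟨fun i j => ?_, fun i => ?_, fun j => ?_⟩
  · exact div_nonneg (sum_nonneg fun c _ => hnonneg _ _) n.cast_nonneg
  · simp only [mergeColumns, LinearMap.coe_mk, AddHom.coe_mk, of_apply]
    rw [← sum_div, ← Fintype.sum_prod_type', e.sum_comp, hrow]
  · simp only [mergeColumns, LinearMap.coe_mk, AddHom.coe_mk, of_apply]
    rw [← sum_div, sum_comm]
    simp [hcol]

lemma spreadColumns_mem_doublyStochastic (hd : d ≠ 0) {X : Matrix (Fin n) (Fin k) ℝ}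
    (hX : X ∈ transportPolytope (fun _ => (1 : ℝ) / n) (fun _ => (d : ℝ) / n)) :
    spreadColumns e X ∈ doublyStochastic ℝ (Fin n) := by
  obtain ⟨hnonneg, hrow, hcol⟩ := hX
  refine mem_doublyStochastic_iff_sum.2 ⟨fun i l => ?_, fun i => ?_, fun l => ?_⟩
  · have := hnonneg i (e.symm l).1
    simp only [spreadColumns, of_apply]
    positivity
  · have hn : (n : ℝ) ≠ 0 := Nat.cast_ne_zero.2 i.pos.ne'
    simp only [spreadColumns, of_apply]
    have hd' : (d : ℝ) ≠ 0 := Nat.cast_ne_zero.2 hd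
    rw [← e.sum_comp, Fintype.sum_prod_type]
    simp only [e.symm_apply_apply, sum_const, card_univ, Fintype.card_fin, nsmul_eq_mul]
    simp only [mul_div_cancel₀ _ hd', ← mul_sum, hrow]
    field_simp
  · have hn : (n : ℝ) ≠ 0 := Nat.cast_ne_zero.2 l.pos.ne'
    simp only [spreadColumns, of_apply]
    rw [← sum_div, ← mul_sum, hcol]
    field_simp

lemma mergeColumns_spreadColumns (hd : d ≠ 0) (X : Matrix (Fin n) (Fin k) ℝ) :
    mergeColumns e (spreadColumns e X) = X := by
  ext i j
  have hn : (n : ℝ) ≠ 0 := Nat.cast_ne_zero.2 i.pos.ne'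
  simp only [mergeColumns, spreadColumns, LinearMap.coe_mk, AddHom.coe_mk, of_apply,
    Equiv.symm_apply_apply, sum_const, card_univ, Fintype.card_fin, nsmul_eq_mul]
  field_simp

theorem transportPolytope_eq_convexHull (hd : d ≠ 0) :
    transportPolytope (fun _ => (1 : ℝ) / n) (fun _ => (d : ℝ) / n) =
      convexHull ℝ (Set.range fun σ : Equiv.Perm (Fin n) =>
        (1 / n : ℝ) • partitionMatrix fun i => (e.symm (σ i)).1) := by
  have himage : transportPolytope (fun _ => (1 : ℝ) / n) (fun _ => (d : ℝ) / n) =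
      mergeColumns e '' doublyStochastic ℝ (Fin n) :=
    subset_antisymm
      (fun X hX =>
        ⟨_, spreadColumns_mem_doublyStochastic e hd hX, mergeColumns_spreadColumns e hd X⟩)
      (Set.image_subset_iff.2 fun M hM => mergeColumns_mem_transportPolytope e hM)
  rw [himage, doublyStochastic_eq_convexHull_permMatrix, LinearMap.image_convexHull]
  congr 1
  ext X
  simp [mergeColumns_permMatrix]

theorem exists_balanced_partitionMatrix_of_mem_extremePoints (hn : n = k * d) (hd : d ≠ 0)
    {X : Matrix (Fin n) (Fin k) ℝ}
    (hX : X ∈ Set.extremePoints ℝ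
      (transportPolytope (fun _ => (1 : ℝ) / n) (fun _ => (d : ℝ) / n))) :
    ∃ f : Fin n → Fin k, (∀ j, #{i | f i = j} = d) ∧ X = (1 / n : ℝ) • partitionMatrix f := by
  let e : Fin k × Fin d ≃ Fin n := finProdFinEquiv.trans (finCongr hn.symm)
  rw [transportPolytope_eq_convexHull e hd] at hX
  obtain ⟨σ, rfl⟩ := extremePoints_convexHull_subset hX
  exact ⟨_, card_filter_fst_equiv_eq (σ.trans e.symm), rfl⟩

theorem extremePoint_uniform_is_balanced_partition_general {n k : ℕ}
    (hn : 0 < n) (hkn : k ∣ n)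
    (X : Matrix (Fin n) (Fin k) ℝ)
    (hX : X ∈ Set.extremePoints ℝ
      (transportPolytope (fun _ : Fin n => (1 : ℝ) / n) (fun _ : Fin k => (1 : ℝ) / k))) :
    (∀ i j, X i j = 0 ∨ X i j = 1 / n) ∧
      (∀ i, ∃! j, X i j = 1 / n) ∧
      (∀ j, (Finset.univ.filter (fun i => X i j ≠ 0)).card = n / k) := by
  obtain ⟨d, hnkd⟩ := hkn
  have hk : k ≠ 0 := by rintro rfl; omega
  have hd : d ≠ 0 := by rintro rfl; omega
  have hmargin : (1 : ℝ) / k = d / n := by rw [hnkd]; push_cast; field_simp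
  rw [hmargin] at hX
  obtain ⟨f, hf, rfl⟩ := exists_balanced_partitionMatrix_of_mem_extremePoints hnkd hd hX
  refine ⟨fun i j => ?_, fun i => ⟨f i, ?_, fun j hj => ?_⟩, fun j => ?_⟩
  · by_cases h : f i = j <;> simp [partitionMatrix, h]
  · simp [partitionMatrix]
  · by_contra h
    simp [partitionMatrix, Ne.symm h] at hj
    exact hn.ne (by exact_mod_cast hj)
  · simp [partitionMatrix, hf, hnkd, hk, hd]

/-- **Extreme points of the uniform transportation polytope are balanced partition
matrices.**  If `k ∣ n` and `w = (1/n)𝟙ₙ`, `v = (1/k)𝟙ₖ`, then every extreme point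
`X` of `Π(w, v)` has all entries in `{0, 1/n}`; equivalently, `nX` is a `0/1` matrix
with exactly one `1` per row and each column summing to `n/k`, i.e. up to the factor
`1/n` every extreme point is a partition matrix whose clusters all have cardinality
`n/k`. -/
theorem extremePoint_uniform_is_balanced_partition {n k : ℕ}
    (hn : 0 < n) (hk : 0 < k) (hkn : k ∣ n)
    (X : Matrix (Fin n) (Fin k) ℝ)
    (hX : X ∈ Set.extremePoints ℝ
      (transportPolytope (fun _ : Fin n => (1 : ℝ) / n) (fun _ : Fin k => (1 : ℝ) / k))) :
    (∀ i j, X i j = 0 ∨ X i j = 1 / n) ∧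
      (∀ i, ∃! j, X i j = 1 / n) ∧
      (∀ j, (Finset.univ.filter (fun i => X i j ≠ 0)).card = n / k) :=
  extremePoint_uniform_is_balanced_partition_general hn hkn X hX
end
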